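/- In the Poincaré half-space model of ℍⁿ (n ≥ 2), for every δ > 0 the set (C)_δ = {(x̂, x_n) : x_n > 0, ‖x̂‖_e ≤ 1 − sinh(δ)·x_n}, the inner δ-parallel set of the hyperbolic cylinder C = {‖x̂‖_e ≤ 1}, is not geodesically convex: there exist points p, q ∈ (C)_δ such that the hyperbolic geodesic joining p and q leaves (C)_δ. -/
import Mathlib


open Set

/-- The hyperbolic distance in the Poincaré half-space model, where a point is
a pair `(x̂, x_n) ∈ ℝ^{m} × ℝ` (the model being `ℍ^{m+1}`, so `m = n - 1`):
`d(x,y) = 2 arcsinh(‖x - y‖_e / (2√(x_n y_n)))`. -/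
noncomputable def hdist {m : ℕ} (x y : EuclideanSpace ℝ (Fin m) × ℝ) : ℝ :=
  2 * Real.arsinh
    (Real.sqrt (‖x.1 - y.1‖ ^ 2 + (x.2 - y.2) ^ 2) / (2 * Real.sqrt (x.2 * y.2)))

/-- `γ`, parametrized proportionally to arc length on `[0,1]` and staying in the
upper half-space, is the minimal hyperbolic geodesic segment joining `p` and `q`. -/
def IsMinGeodesicH {m : ℕ} (p q : EuclideanSpace ℝ (Fin m) × ℝ)
    (γ : ℝ → EuclideanSpace ℝ (Fin m) × ℝ) : Prop :=
  γ 0 = p ∧ γ 1 = q ∧ (∀ t ∈ Icc (0 : ℝ) 1, 0 < (γ t).2) ∧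
    ∀ s ∈ Icc (0 : ℝ) 1, ∀ t ∈ Icc (0 : ℝ) 1,
      hdist (γ s) (γ t) = |s - t| * hdist p q

/-- The inner `δ`-parallel set of the hyperbolic cylinder `{‖x̂‖ ≤ 1}`. -/
noncomputable def innerParallel (m : ℕ) (δ : ℝ) :
    Set (EuclideanSpace ℝ (Fin m) × ℝ) :=
  {x | 0 < x.2 ∧ ‖x.1‖ ≤ 1 - Real.sinh δ * x.2}

/-- Key hyperbolic identity for the chordal distance along a geodesic semicircle. -/
lemma hyp_ident (a b : ℝ) :
    (Real.tanh a - Real.tanh b) ^ 2 + (1 / Real.cosh a - 1 / Real.cosh b) ^ 2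
      = 4 * Real.sinh ((a - b) / 2) ^ 2 / (Real.cosh a * Real.cosh b) := by
  have hA0 : 0 < Real.exp (a / 2) := Real.exp_pos _
  have hB0 : 0 < Real.exp (b / 2) := Real.exp_pos _
  set A := Real.exp (a / 2) with hA
  set B := Real.exp (b / 2) with hB
  have ea : Real.exp a = A * A := by rw [hA, ← Real.exp_add]; congr 1; ring
  have eb : Real.exp b = B * B := by rw [hB, ← Real.exp_add]; congr 1; ring
  have ena : Real.exp (-a) = (A * A)⁻¹ := by rw [Real.exp_neg, ea]
  have enb : Real.exp (-b) = (B * B)⁻¹ := by rw [Real.exp_neg, eb]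
  have eab : Real.exp ((a - b) / 2) = A / B := by
    rw [hA, hB, ← Real.exp_sub]; congr 1; ring
  have enab : Real.exp (-((a - b) / 2)) = B / A := by
    rw [hB, hA, ← Real.exp_sub]; congr 1; ring
  rw [Real.tanh_eq_sinh_div_cosh, Real.tanh_eq_sinh_div_cosh,
    Real.sinh_eq, Real.sinh_eq, Real.sinh_eq, Real.cosh_eq, Real.cosh_eq,
    ea, eb, ena, enb, eab, enab]
  have h1 : A * A + (A * A)⁻¹ ≠ 0 := by positivity
  have h2 : B * B + (B * B)⁻¹ ≠ 0 := by positivity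
  field_simp
  ring

/-- Hyperbolic distance along the standard geodesic semicircle of radius `r`. -/
lemma hdist_param {m : ℕ} (e : EuclideanSpace ℝ (Fin m)) (he : ‖e‖ = 1)
    {r : ℝ} (hr : 0 < r) (a b : ℝ) :
    hdist ((r * Real.tanh a) • e, r / Real.cosh a)
      ((r * Real.tanh b) • e, r / Real.cosh b) = |a - b| := by
  have hca := Real.cosh_pos a
  have hcb := Real.cosh_pos b
  have hnorm : ‖(r * Real.tanh a) • e - (r * Real.tanh b) • e‖
      = |r * Real.tanh a - r * Real.tanh b| := by
    rw [← sub_smul, norm_smul, he, Real.norm_eq_abs, mul_one]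
  have hD : (0:ℝ) < r / Real.cosh a * (r / Real.cosh b) := by positivity
  have h2D : (0:ℝ) ≤ 2 * Real.sqrt (r / Real.cosh a * (r / Real.cosh b)) := by positivity
  have hN : ‖(r * Real.tanh a) • e - (r * Real.tanh b) • e‖ ^ 2
        + (r / Real.cosh a - r / Real.cosh b) ^ 2
      = Real.sinh ((a - b) / 2) ^ 2
        * (2 * Real.sqrt (r / Real.cosh a * (r / Real.cosh b))) ^ 2 := by
    rw [hnorm, sq_abs, mul_pow, Real.sq_sqrt hD.le]
    have e1 : (r * Real.tanh a - r * Real.tanh b) ^ 2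
        + (r / Real.cosh a - r / Real.cosh b) ^ 2
        = r ^ 2 * ((Real.tanh a - Real.tanh b) ^ 2
            + (1 / Real.cosh a - 1 / Real.cosh b) ^ 2) := by ring
    rw [e1, hyp_ident a b]
    field_simp
    ring
  have hsqrt : Real.sqrt (‖(r * Real.tanh a) • e - (r * Real.tanh b) • e‖ ^ 2
        + (r / Real.cosh a - r / Real.cosh b) ^ 2)
      = |Real.sinh ((a - b) / 2)|
        * (2 * Real.sqrt (r / Real.cosh a * (r / Real.cosh b))) := by
    rw [hN, Real.sqrt_mul (sq_nonneg _), Real.sqrt_sq_eq_abs, Real.sqrt_sq_eq_abs,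
      abs_of_nonneg h2D]
  have habs : |Real.sinh ((a - b) / 2)| = Real.sinh (|a - b| / 2) := by
    rcases le_or_gt 0 (a - b) with h | h
    · rw [abs_of_nonneg (Real.sinh_nonneg_iff.mpr (by linarith)), abs_of_nonneg h]
    · rw [abs_of_neg (Real.sinh_neg_iff.mpr (by linarith)), abs_of_neg h,
        ← Real.sinh_neg]
      congr 1; ring
  unfold hdist
  simp only
  rw [hsqrt, habs, mul_div_assoc,
    div_self (by positivity : (2 * Real.sqrt (r / Real.cosh a * (r / Real.cosh b))) ≠ 0),
    mul_one, Real.arsinh_sinh]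
  ring

/-- For every `δ > 0` the inner `δ`-parallel set of the hyperbolic cylinder is
not geodesically convex: some hyperbolic geodesic segment with endpoints in the
set leaves it. -/
theorem stmt_13 (m : ℕ) (hm : 1 ≤ m) (δ : ℝ) (hδ : 0 < δ) :
    ∃ p q : EuclideanSpace ℝ (Fin m) × ℝ,
      p ∈ innerParallel m δ ∧ q ∈ innerParallel m δ ∧
      ∃ γ : ℝ → EuclideanSpace ℝ (Fin m) × ℝ, IsMinGeodesicH p q γ ∧
        ∃ t ∈ Icc (0 : ℝ) 1, γ t ∉ innerParallel m δ := by
  set K := Real.sinh δ with hKdef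
  have hK : 0 < K := Real.sinh_pos_iff.mpr hδ
  set Q := Real.sqrt (K ^ 2 + 1) with hQdef
  have hQsq : Q ^ 2 = K ^ 2 + 1 := Real.sq_sqrt (by positivity)
  have hQpos : 0 < Q := Real.sqrt_pos.mpr (by positivity)
  have hKQ : K < Q := by nlinarith [sq_nonneg (Q - K)]
  set M := (2 * Q + K ^ 3) / (K ^ 2 + 2) with hMdef
  have hMQ : M < Q := by
    rw [hMdef, div_lt_iff₀ (by positivity)]
    nlinarith
  have hKM : K < M := by
    rw [hMdef, lt_div_iff₀ (by positivity)]
    nlinarith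
  set r := 2 / (Q + M) with hrdef
  have hQM : 0 < Q + M := by linarith
  have hr : 0 < r := by positivity
  have hrQ : 1 < r * Q := by
    rw [hrdef, div_mul_eq_mul_div, lt_div_iff₀ hQM]; linarith
  have hrM : r * M < 1 := by
    rw [hrdef, div_mul_eq_mul_div, div_lt_one hQM]; linarith
  have hrK : r * K < 1 := lt_trans (by nlinarith) hrM
  -- the half arclength parameter
  set s := Real.arsinh (1 / K) with hsdef
  have hs_pos : 0 < s := Real.arsinh_pos_iff.mpr (by positivity)
  have hs_sinh : Real.sinh s = 1 / K := Real.sinh_arsinh _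
  have hs_cosh : Real.cosh s = Q / K := by
    rw [hsdef, Real.cosh_arsinh,
      show (1 : ℝ) + (1 / K) ^ 2 = (Q / K) ^ 2 by
        rw [div_pow, div_pow, hQsq]; field_simp,
      Real.sqrt_sq (by positivity)]
  have hs2_sinh : Real.sinh (2 * s) = 2 * Q / K ^ 2 := by
    rw [Real.sinh_two_mul, hs_sinh, hs_cosh]; field_simp
  have hs2_cosh : Real.cosh (2 * s) = (K ^ 2 + 2) / K ^ 2 := by
    rw [Real.cosh_two_mul, hs_cosh, hs_sinh, div_pow, div_pow, hQsq]
    field_simp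
    ring
  have ht2 : Real.tanh (2 * s) = 2 * Q / (K ^ 2 + 2) := by
    rw [Real.tanh_eq_sinh_div_cosh, hs2_sinh, hs2_cosh]
    field_simp
  have hts : Real.tanh s = 1 / Q := by
    rw [Real.tanh_eq_sinh_div_cosh, hs_sinh, hs_cosh]
    field_simp
  set e : EuclideanSpace ℝ (Fin m) := EuclideanSpace.single (⟨0, hm⟩ : Fin m) 1 with hedef
  have he : ‖e‖ = 1 := by rw [hedef, EuclideanSpace.norm_single]; norm_num
  set γ : ℝ → EuclideanSpace ℝ (Fin m) × ℝ :=
    fun t => ((r * Real.tanh (2 * s * t)) • e, r / Real.cosh (2 * s * t)) with hγ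
  have hnormγ : ∀ t : ℝ, ‖(γ t).1‖ = |r * Real.tanh (2 * s * t)| := by
    intro t
    rw [hγ]
    simp only
    rw [norm_smul, he, Real.norm_eq_abs, mul_one]
  refine ⟨γ 0, γ 1, ?_, ?_, γ, ⟨rfl, rfl, ?_, ?_⟩, 1/2, by constructor <;> norm_num, ?_⟩
  · -- γ 0 ∈ innerParallel
    constructor
    · simp only [hγ]
      positivity
    · rw [hnormγ 0]
      simp only [hγ, mul_zero, Real.tanh_zero, Real.cosh_zero, abs_zero, div_one]
      rw [← hKdef]
      nlinarith
  · -- γ 1 ∈ innerParallel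
    constructor
    · simp only [hγ]
      positivity
    · rw [hnormγ 1]
      simp only [hγ, mul_one, ht2, hs2_cosh, ← hKdef]
      rw [abs_of_nonneg (by positivity)]
      have hd : (0:ℝ) < K ^ 2 + 2 := by positivity
      have e1 : r / ((K ^ 2 + 2) / K ^ 2) = r * K ^ 2 / (K ^ 2 + 2) := by
        field_simp
      rw [e1, le_sub_iff_add_le]
      have e2 : r * (2 * Q / (K ^ 2 + 2)) + K * (r * K ^ 2 / (K ^ 2 + 2)) = r * M := by
        rw [hMdef]; field_simp
      rw [e2]
      linarith
  · -- positivity along γ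
    intro t _
    simp only [hγ]
    positivity
  · -- geodesic equation
    intro u _ v _
    have h1 : hdist (γ u) (γ v) = |2 * s * u - 2 * s * v| := hdist_param e he hr _ _
    have h2 : hdist (γ 0) (γ 1) = |2 * s * 0 - 2 * s * 1| := hdist_param e he hr _ _
    rw [h1, h2]
    rw [show 2 * s * u - 2 * s * v = (2 * s) * (u - v) by ring,
      show 2 * s * 0 - 2 * s * 1 = -(2 * s) by ring, abs_mul, abs_neg,
      abs_of_pos (by positivity : (0:ℝ) < 2 * s)]
    ring
  · -- γ (1/2) leaves the set
    intro hmem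
    obtain ⟨-, hle⟩ := hmem
    rw [hnormγ (1/2)] at hle
    simp only [hγ] at hle
    rw [show 2 * s * (1/2 : ℝ) = s by ring, hts, hs_cosh, ← hKdef] at hle
    rw [abs_of_nonneg (by positivity)] at hle
    have e1 : r / (Q / K) = r * K / Q := by field_simp
    rw [e1, le_sub_iff_add_le] at hle
    have e2 : r * (1 / Q) + K * (r * K / Q) = r * Q := by
      have : r * (1 / Q) + K * (r * K / Q) = r * (Q ^ 2) / Q := by
        rw [hQsq]; field_simp; ring
      rw [this, sq]
      field_simp
    rw [e2] at hle
    linarith
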